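/- arXiv:1501.06862 — 2 statements merged into one kernel-verified Lean document; each statement's English description precedes it below -/
import Mathlib

section
/- Let a, b ∈ ℝ with a > b > 0 and let C = t² + 1 + ε(b·j·t + a·i) ∈ DH[t]. Set h₁ = k − ((a−b)/(a+b))·ε·i, h₂ = −k + ε·(2(a−b)·i − (a+b)²·j)/(2(a+b)), h₃ = −k − ε·(i − ((a−b)/2)·j), and h₄ = k + ε·i. Then (t² + 1)·C = (t − h₁)·(t − h₂)·(t − h₃)·(t − h₄). -/
open Polynomial
noncomputable section

/-- The dual quaternions: dual numbers over the real quaternions. -/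
abbrev DH : Type := DualNumber (Quaternion ℝ)

/-- Dual quaternion conjugation: the conjugate of `p + εq` is `p̄ + εq̄`. -/
def dconj (h : DH) : DH :=
  TrivSqZeroExt.inl (star (TrivSqZeroExt.fst h)) + TrivSqZeroExt.inr (star (TrivSqZeroExt.snd h))

/-- Coefficientwise conjugation of a dual quaternion polynomial. -/
def pconj (P : Polynomial DH) : Polynomial DH :=
  P.sum fun n a => Polynomial.monomial n (dconj a)

/-- The quaternion unit i. -/
def qi : Quaternion ℝ := ⟨0,1,0,0⟩
/-- The quaternion unit j. -/
def qj : Quaternion ℝ := ⟨0,0,1,0⟩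
/-- The quaternion unit k. -/
def qk : Quaternion ℝ := ⟨0,0,0,1⟩

/-- A dual quaternion polynomial is real if all its coefficients are real scalars. -/
def IsRealPoly (P : Polynomial DH) : Prop :=
  ∃ r : Polynomial ℝ, P = r.map (algebraMap ℝ DH)

/-- The primal part of a dual quaternion polynomial. -/
def primalPart (C : Polynomial DH) : Polynomial (Quaternion ℝ) :=
  C.sum fun n a => Polynomial.monomial n (TrivSqZeroExt.fst a)

/-!
Pair the linear factors. Since `t` is central and `ε² = 0`, each pair multiplies out to a
translation of the same shape as `C`: `(t - h₁)(t - h₂) = t² + 1 + ε·((a+b)/2)·(j t + i)`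
(whatever the common `εi`-coefficient of `-h₁` and `h₂`, here `(a-b)/(a+b)`), and
`(t - h₃)(t - h₄) = t² + 1 + ε·((a-b)/2)·(-j t + i)`. Two such translations `P + εE`, `P + εE'`
with `P = t² + 1` multiply to `P·(P + εE + εE')`, and the dual parts add up to `b j t + a i`.
-/

open TrivSqZeroExt

section Ring

variable {R : Type*} [Ring R]

lemma X_sub_C_mul_X_sub_C (p q : R) :
    ((X : R[X]) - C p) * (X - C q) = X ^ 2 - C (p + q) * X + C (p * q) := by
  simp only [sub_mul, mul_sub, X_mul_C, map_add, map_mul, sq]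
  noncomm_ring

lemma C_mul_X_add_C_mul_C_mul_X_add_C (u v u' v' : R) :
    (C u * X + C v : R[X]) * (C u' * X + C v') =
      C (u * u') * X ^ 2 + C (u * v' + v * u') * X + C (v * v') := by
  simp only [add_mul, mul_add, mul_assoc, X_mul, map_mul, map_add, sq]
  simp only [← mul_assoc]
  noncomm_ring

lemma X_sub_C_mul_X_sub_C_of_add_of_mul {p q s m : R} (hadd : p + q = -s) (hmul : p * q = 1 + m) :
    ((X : R[X]) - C p) * (X - C q) = X ^ 2 + 1 + C s * X + C m := by
  rw [X_sub_C_mul_X_sub_C, hadd, hmul, map_neg, neg_mul, sub_neg_eq_add, map_add, map_one]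
  abel

lemma add_mul_add_of_commute_of_mul_eq_zero {x y z : R} (hxy : Commute x y) (hyz : y * z = 0) :
    (x + y) * (x + z) = x * (x + y + z) := by
  simp only [add_mul, mul_add, hyz, add_zero, ← hxy.eq]

end Ring

section DualNumber

variable {A : Type*} [Ring A]

lemma X_sq_add_one_add_inr_mul_X_sq_add_one_add_inr (u v u' v' : A) :
    ((X : (DualNumber A)[X]) ^ 2 + 1 + C (inr u) * X + C (inr v)) *
        (X ^ 2 + 1 + C (inr u') * X + C (inr v')) =
      (X ^ 2 + 1) * (X ^ 2 + 1 + C (inr (u + u')) * X + C (inr (v + v'))) := by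
  set E : (DualNumber A)[X] := C (inr u) * X + C (inr v)
  set E' : (DualNumber A)[X] := C (inr u') * X + C (inr v')
  have hcomm : Commute ((X : (DualNumber A)[X]) ^ 2 + 1) E :=
    ((commute_X _).pow_left 2).add_left (Commute.one_left _)
  have hEE' : E * E' = 0 := by
    simp only [E, E', C_mul_X_add_C_mul_C_mul_X_add_C, inr_mul_inr, add_zero, map_zero, zero_mul]
  calc _ = (X ^ 2 + 1 + E) * (X ^ 2 + 1 + E') := by simp only [E, E', add_assoc]
    _ = (X ^ 2 + 1) * (X ^ 2 + 1 + E + E') := add_mul_add_of_commute_of_mul_eq_zero hcomm hEE'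
    _ = _ := by congr 1; simp only [E, E', inr_add, map_add, add_mul]; abel

end DualNumber

section UnitQuaternions

open Quaternion

lemma qk_mul_qk : qk * qk = -1 := by
  ext <;> simp [re_mul, imI_mul, imJ_mul, imK_mul] <;> simp [qk]

lemma qk_mul_qi : qk * qi = qj := by
  ext <;> simp [re_mul, imI_mul, imJ_mul, imK_mul] <;> simp [qi, qj, qk]

lemma qi_mul_qk : qi * qk = -qj := by
  ext <;> simp [re_mul, imI_mul, imJ_mul, imK_mul] <;> simp [qi, qj, qk]

lemma qk_mul_qj : qk * qj = -qi := by
  ext <;> simp [re_mul, imI_mul, imJ_mul, imK_mul] <;> simp [qi, qj, qk]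

lemma qj_mul_qk : qj * qk = qi := by
  ext <;> simp [re_mul, imI_mul, imJ_mul, imK_mul] <;> simp [qi, qj, qk]

end UnitQuaternions

lemma X_sub_C_k_mul_X_sub_C_neg_k (α γ : ℝ) :
    ((X : DH[X]) - C (inl qk - inr (α • qi))) * (X - C (-inl qk + inr (α • qi - γ • qj))) =
      X ^ 2 + 1 + C (inr (γ • qj)) * X + C (inr (γ • qi)) := by
  apply X_sub_C_mul_X_sub_C_of_add_of_mul
  · rw [inr_sub]; abel
  · ext <;> simp [mul_sub, qk_mul_qk, qk_mul_qi, qi_mul_qk, qk_mul_qj]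

lemma X_sub_C_neg_k_mul_X_sub_C_k (δ : ℝ) :
    ((X : DH[X]) - C (-inl qk - inr (qi - δ • qj))) * (X - C (inl qk + inr qi)) =
      X ^ 2 + 1 + C (inr (-δ • qj)) * X + C (inr (δ • qi)) := by
  apply X_sub_C_mul_X_sub_C_of_add_of_mul
  · rw [inr_sub, neg_smul, inr_neg]; abel
  · ext <;> simp [sub_mul, qk_mul_qk, qk_mul_qi, qi_mul_qk, qj_mul_qk]

/-- The multiplication trick: for the elliptic translation
`C = t² + 1 + ε(b·j·t + a·i)` with `a > b > 0`, the product `(t² + 1)·C`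
factors into the four linear factors given by
`h₁ = k - ((a-b)/(a+b))·ε·i`, `h₂ = -k + ε(2(a-b)·i - (a+b)²·j)/(2(a+b))`,
`h₃ = -k - ε(i - ((a-b)/2)·j)`, `h₄ = k + ε·i`. -/
theorem multiplication_trick_elliptic_translation (a b : ℝ) (hab : a > b) (hb : b > 0) :
    ((X : Polynomial DH) ^ 2 + 1) *
        ((X : Polynomial DH) ^ 2 + 1 +
          Polynomial.C (TrivSqZeroExt.inr (b • qj)) * X +
          Polynomial.C (TrivSqZeroExt.inr (a • qi))) =
      (X - Polynomial.C (TrivSqZeroExt.inl qk -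
          TrivSqZeroExt.inr (((a - b) / (a + b)) • qi))) *
      (X - Polynomial.C (-(TrivSqZeroExt.inl qk) +
          TrivSqZeroExt.inr ((2 * (a + b))⁻¹ •
            ((2 * (a - b)) • qi - ((a + b) ^ 2) • qj)))) *
      (X - Polynomial.C (-(TrivSqZeroExt.inl qk) -
          TrivSqZeroExt.inr (qi - ((a - b) / 2) • qj))) *
      (X - Polynomial.C (TrivSqZeroExt.inl qk + TrivSqZeroExt.inr qi)) := by
  have hab' : a + b ≠ 0 := by linarith
  have h₂ : (2 * (a + b))⁻¹ • ((2 * (a - b)) • qi - ((a + b) ^ 2) • qj) =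
      ((a - b) / (a + b)) • qi - ((a + b) / 2) • qj := by
    rw [smul_sub, smul_smul, smul_smul]
    congr 2 <;> field_simp
  have hj : ((a + b) / 2) • qj + (-((a - b) / 2)) • qj = b • qj := by rw [← add_smul]; ring_nf
  have hi : ((a + b) / 2) • qi + ((a - b) / 2) • qi = a • qi := by rw [← add_smul]; ring_nf
  rw [h₂, mul_assoc, X_sub_C_k_mul_X_sub_C_neg_k, X_sub_C_neg_k_mul_X_sub_C_k,
    X_sq_add_one_add_inr_mul_X_sq_add_one_add_inr, hj, hi]
end
end

section
/- Let a, b, c ∈ ℝ \ {0} and let C ∈ DH[t] be the motion polynomial of the line symmetric motion with respect to one family of rulings of the hyperboloid x²b²c² + y²a²c² − z²a²b² = a²b²c², namely C = (b²+c²)t² + (2a(c·j + b·k) − 2ε(a²(b·j − c·k) − bc(b·k + c·j)))t + 2bc·i − b² + c² − 2aε((b²−c²)·i + 2bc). If a = b, then the norm polynomial satisfies C·C̄ = (a²+c²)²·(t²+1)². -/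
open Polynomial
noncomputable section

/-- The motion polynomial of the line symmetric motion with respect to one family of
rulings of the hyperboloid `x²b²c² + y²a²c² − z²a²b² = a²b²c²`:
`C = (b²+c²)t² + (2a(c·j + b·k) − 2ε(a²(b·j − c·k) − bc(b·k + c·j)))t
     + 2bc·i − b² + c² − 2aε((b²−c²)·i + 2bc)`. -/
def lineSymC (a b c : ℝ) : Polynomial DH :=
  Polynomial.C (algebraMap ℝ DH (b ^ 2 + c ^ 2)) * X ^ 2 +
  Polynomial.C (TrivSqZeroExt.inl ((2 * a) • (c • qj + b • qk)) -
    TrivSqZeroExt.inr ((2 : ℝ) •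
      (a ^ 2 • (b • qj - c • qk) - (b * c) • (b • qk + c • qj)))) * X +
  Polynomial.C (TrivSqZeroExt.inl
      ((2 * b * c) • qi + algebraMap ℝ (Quaternion ℝ) (c ^ 2 - b ^ 2)) -
    TrivSqZeroExt.inr ((2 * a) •
      ((b ^ 2 - c ^ 2) • qi + algebraMap ℝ (Quaternion ℝ) (2 * b * c))))

/-!
Write `C = s t² + c₁ t + c₀` with `s = b² + c²` real. In `C·C̄` the coefficients of `t³` and `t`
vanish, because the primal and dual parts of `c₁` lie in `span(j, k)` and those of `c₀` in
`span(1, i)`; the even coefficients are real, and for all `a, b, c`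
`C·C̄ = s (s t⁴ + 2(2a² − b² + c²) t² + s)`. For `a = b` the middle coefficient is `2s²`.
-/

open scoped Quaternion

@[simp] theorem re_qi : qi.re = 0 := rfl
@[simp] theorem imI_qi : qi.imI = 1 := rfl
@[simp] theorem imJ_qi : qi.imJ = 0 := rfl
@[simp] theorem imK_qi : qi.imK = 0 := rfl
@[simp] theorem re_qj : qj.re = 0 := rfl
@[simp] theorem imI_qj : qj.imI = 0 := rfl
@[simp] theorem imJ_qj : qj.imJ = 1 := rfl
@[simp] theorem imK_qj : qj.imK = 0 := rfl
@[simp] theorem re_qk : qk.re = 0 := rfl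
@[simp] theorem imI_qk : qk.imI = 0 := rfl
@[simp] theorem imJ_qk : qk.imJ = 0 := rfl
@[simp] theorem imK_qk : qk.imK = 1 := rfl

@[simp] theorem fst_dconj (x : DH) : (dconj x).fst = star x.fst := by simp [dconj]
@[simp] theorem snd_dconj (x : DH) : (dconj x).snd = star x.snd := by simp [dconj]

@[simp] theorem dconj_zero : dconj 0 = 0 := by ext <;> simp

theorem dconj_add (x y : DH) : dconj (x + y) = dconj x + dconj y := by ext <;> simp

theorem pconj_add (P Q : DH[X]) : pconj (P + Q) = pconj P + pconj Q :=
  sum_add_index _ _ _ (by simp) fun _ _ _ ↦ by rw [dconj_add, map_add]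

theorem pconj_C_mul_X_pow (a : DH) (n : ℕ) : pconj (C a * X ^ n) = C (dconj a) * X ^ n := by
  simp only [pconj, C_mul_X_pow_eq_monomial, sum_monomial_index, dconj_zero, monomial_zero_right]

theorem pconj_quadratic (a₂ a₁ a₀ : DH) :
    pconj (C a₂ * X ^ 2 + C a₁ * X + C a₀) =
      C (dconj a₂) * X ^ 2 + C (dconj a₁) * X + C (dconj a₀) := by
  simpa only [pconj_add, pow_one, pow_zero, mul_one] using
    congr($(pconj_C_mul_X_pow a₂ 2) + $(pconj_C_mul_X_pow a₁ 1) + $(pconj_C_mul_X_pow a₀ 0))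

theorem quadratic_mul_quadratic {R : Type*} [Semiring R] (a₂ a₁ a₀ b₂ b₁ b₀ : R) :
    (C a₂ * X ^ 2 + C a₁ * X + C a₀) * (C b₂ * X ^ 2 + C b₁ * X + C b₀) =
      C (a₂ * b₂) * X ^ 4 + C (a₂ * b₁ + a₁ * b₂) * X ^ 3 +
        C (a₂ * b₀ + a₁ * b₁ + a₀ * b₂) * X ^ 2 + C (a₁ * b₀ + a₀ * b₁) * X + C (a₀ * b₀) := by
  simp only [C_mul_X_pow_eq_monomial, C_mul_X_eq_monomial]
  simp only [← monomial_zero_left, add_mul, mul_add, monomial_mul_monomial, map_add]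
  abel

theorem quadratic_mul_pconj_eq_map {a₂ a₁ a₀ : DH} {n₄ n₂ n₀ : ℝ}
    (h₄ : a₂ * dconj a₂ = algebraMap ℝ DH n₄)
    (h₃ : a₂ * dconj a₁ + a₁ * dconj a₂ = 0)
    (h₂ : a₂ * dconj a₀ + a₁ * dconj a₁ + a₀ * dconj a₂ = algebraMap ℝ DH n₂)
    (h₁ : a₁ * dconj a₀ + a₀ * dconj a₁ = 0)
    (h₀ : a₀ * dconj a₀ = algebraMap ℝ DH n₀) :
    (C a₂ * X ^ 2 + C a₁ * X + C a₀) * pconj (C a₂ * X ^ 2 + C a₁ * X + C a₀) =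
      (C n₄ * X ^ 4 + C n₂ * X ^ 2 + C n₀).map (algebraMap ℝ DH) := by
  rw [pconj_quadratic, quadratic_mul_quadratic, h₄, h₃, h₂, h₁, h₀]
  simp

def lineSymNorm (a b c : ℝ) : ℝ[X] :=
  C ((b ^ 2 + c ^ 2) ^ 2) * X ^ 4 +
    C (2 * (b ^ 2 + c ^ 2) * (2 * a ^ 2 - b ^ 2 + c ^ 2)) * X ^ 2 + C ((b ^ 2 + c ^ 2) ^ 2)

set_option maxHeartbeats 400000 in
theorem lineSymC_mul_pconj (a b c : ℝ) :
    lineSymC a b c * pconj (lineSymC a b c) = (lineSymNorm a b c).map (algebraMap ℝ DH) := by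
  refine quadratic_mul_pconj_eq_map ?_ ?_ ?_ ?_ ?_ <;>
    ext : 1 <;> ext <;> simp [TrivSqZeroExt.snd_mul, Algebra.algebraMap_eq_smul_one] <;> ring

theorem lineSymNorm_self (a c : ℝ) :
    lineSymNorm a a c = C ((a ^ 2 + c ^ 2) ^ 2) * (X ^ 2 + 1) ^ 2 := by
  simp only [lineSymNorm, C_mul, C_pow, C_add, C_sub, C_ofNat]
  ring

theorem line_symmetric_norm_of_revolution_general (a b c : ℝ)
    (hab : a = b) :
    lineSymC a b c * pconj (lineSymC a b c) =
      Polynomial.C (algebraMap ℝ DH ((a ^ 2 + c ^ 2) ^ 2)) *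
        ((X : Polynomial DH) ^ 2 + 1) ^ 2 := by
  subst hab
  rw [lineSymC_mul_pconj, lineSymNorm_self]
  simp

/-- If `a = b` (hyperboloid of revolution), the norm polynomial of the line symmetric
motion satisfies `C·C̄ = (a²+c²)²(t²+1)²`. -/
theorem line_symmetric_norm_of_revolution (a b c : ℝ)
    (ha : a ≠ 0) (hb : b ≠ 0) (hc : c ≠ 0) (hab : a = b) :
    lineSymC a b c * pconj (lineSymC a b c) =
      Polynomial.C (algebraMap ℝ DH ((a ^ 2 + c ^ 2) ^ 2)) *
        ((X : Polynomial DH) ^ 2 + 1) ^ 2 :=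
  line_symmetric_norm_of_revolution_general a b c hab
end
end
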